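/- Let d ≥ 2 and let ψ ∈ ℂ^d be a unit vector with pure-state density matrix ρ = |ψ⟩⟨ψ|. Then there exist unitary d×d matrices U₁, U₂, U₃ (whose columns form three orthonormal bases of ℂ^d) such that ∑_{k=1}^{3} (1 − M_Re(U_k† ρ U_k))² = 5/2. -/

import Mathlib

open Matrix Complex ComplexOrder Classical

/-- The positive semidefinite square root of a matrix (junk value `0` if not PSD). -/
noncomputable def psqrt {n : Type*} [Fintype n] [DecidableEq n] (A : Matrix n n ℂ) :
    Matrix n n ℂ :=
  if h : A.PosSemidef then
    h.1.eigenvectorUnitary.1 * diagonal ((↑) ∘ (√·) ∘ h.1.eigenvalues) *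
      (star h.1.eigenvectorUnitary : Matrix n n ℂ)
  else 0

/-- Entrywise complex conjugate of a matrix. -/
def mconj {m n : Type*} (A : Matrix m n ℂ) : Matrix m n ℂ := A.map (starRingEnd ℂ)

/-- Fidelity `F(ρ,σ) = Tr √(√ρ σ √ρ)`. -/
noncomputable def fidelity {n : Type*} [Fintype n] [DecidableEq n] (ρ σ : Matrix n n ℂ) : ℝ :=
  ((psqrt (psqrt ρ * σ * psqrt ρ)).trace).re

/-- The real part state `Re(ρ) = (ρ + ρ*)/2`. -/
noncomputable def reState {n : Type*} (ρ : Matrix n n ℂ) : Matrix n n ℂ :=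
  ((1 : ℂ)/2) • (ρ + mconj ρ)

/-- The imaginarity measure `M_Re(ρ) = 1 - F(ρ, Re(ρ))`. -/
noncomputable def MRe {n : Type*} [Fintype n] [DecidableEq n] (ρ : Matrix n n ℂ) : ℝ :=
  1 - fidelity ρ (reState ρ)

/-- A density matrix: positive semidefinite with trace 1. -/
def IsDensityMatrix {n : Type*} [Fintype n] (ρ : Matrix n n ℂ) : Prop :=
  ρ.PosSemidef ∧ ρ.trace = 1

/-!
For a pure state `ρ = |x⟩⟨x|` the real part state is `(ρ + |x̄⟩⟨x̄|)/2`, and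
`ρ Re(ρ) ρ = ((1 + |xᵀx|²)/2) ρ`; since `ρ` is a projection this gives
`(1 - M_Re(ρ))² = F(ρ, Re ρ)² = (1 + |xᵀx|²)/2`. Rotating `ψ` by a unitary to the real vector `e₀`
gives the value `1`, and rotating it to `(e₀ + i e₁)/√2`, whose `xᵀx` vanishes, gives `1/2`.
Using the first basis twice and the second once yields `1 + 1 + 1/2 = 5/2`.
-/

section Psqrt

open scoped MatrixOrder

variable {n : Type*} [Fintype n] [DecidableEq n]

lemma psqrt_eq_cfcSqrt {A : Matrix n n ℂ} (hA : A.PosSemidef) : psqrt A = CFC.sqrt A := by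
  rw [psqrt, dif_pos hA, CFC.sqrt_eq_cfc, cfc_nnreal_eq_real _ A, hA.1.cfc_eq,
    IsHermitian.cfc, Unitary.conjStarAlgAut_apply]
  congr 3
  funext i
  simp [hA.eigenvalues_nonneg i]

lemma psqrt_smul_of_mul_self_eq {P : Matrix n n ℂ} (hP : P.PosSemidef) (hPP : P * P = P)
    {r : ℝ} (hr : 0 ≤ r) : psqrt (r • P) = √r • P := by
  rw [psqrt_eq_cfcSqrt (hP.smul hr), CFC.sqrt_eq_iff _ _ (hP.smul hr).nonneg
    (hP.smul (Real.sqrt_nonneg r)).nonneg, smul_mul_smul_comm, hPP, ← pow_two,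
    Real.sq_sqrt hr]

end Psqrt

lemma mconj_vecMulVec {m n : Type*} (x : m → ℂ) (y : n → ℂ) :
    mconj (vecMulVec x y) = vecMulVec (star x) (star y) := by
  ext i j
  simp [mconj, vecMulVec_apply]

section PureState

variable {n : Type*} [Fintype n]

lemma conjTranspose_mul_vecMulVec_mul (A : Matrix n n ℂ) (x : n → ℂ) :
    Aᴴ * vecMulVec x (star x) * A = vecMulVec (Aᴴ *ᵥ x) (star (Aᴴ *ᵥ x)) := by
  rw [mul_vecMulVec, vecMulVec_mul, star_mulVec, conjTranspose_conjTranspose]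

variable {x : n → ℂ}

lemma vecMulVec_star_mul_self (hx : star x ⬝ᵥ x = 1) :
    vecMulVec x (star x) * vecMulVec x (star x) = vecMulVec x (star x) := by
  rw [vecMulVec_mul_vecMulVec, hx, one_smul]

lemma vecMulVec_star_mul_reState_mul (hx : star x ⬝ᵥ x = 1) :
    vecMulVec x (star x) * reState (vecMulVec x (star x)) * vecMulVec x (star x) =
      ((1 + Complex.normSq (x ⬝ᵥ x)) / 2) • vecMulVec x (star x) := by
  have hsandwich : vecMulVec x (star x) * vecMulVec (star x) x * vecMulVec x (star x) =
      (Complex.normSq (x ⬝ᵥ x) : ℂ) • vecMulVec x (star x) := by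
    rw [vecMulVec_mul_vecMulVec, vecMulVec_mul_vecMulVec, smul_dotProduct, smul_eq_mul,
      star_dotProduct_star, Complex.star_def,
      ← Complex.normSq_eq_conj_mul_self, vecMulVec_smul]
  rw [reState, mconj_vecMulVec, star_star, Matrix.mul_smul, Matrix.smul_mul, mul_add, add_mul,
    vecMulVec_star_mul_self hx, vecMulVec_star_mul_self hx, hsandwich, ← Complex.coe_smul]
  push_cast
  module

lemma fidelity_reState_vecMulVec [DecidableEq n] (hx : star x ⬝ᵥ x = 1) :
    fidelity (vecMulVec x (star x)) (reState (vecMulVec x (star x))) =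
      √((1 + Complex.normSq (x ⬝ᵥ x)) / 2) := by
  have hP := posSemidef_vecMulVec_self_star x
  have hPP := vecMulVec_star_mul_self hx
  have hsqrtP : psqrt (vecMulVec x (star x)) = vecMulVec x (star x) := by
    simpa using psqrt_smul_of_mul_self_eq hP hPP zero_le_one
  rw [fidelity, hsqrtP, vecMulVec_star_mul_reState_mul hx,
    psqrt_smul_of_mul_self_eq hP hPP (by positivity [Complex.normSq_nonneg (x ⬝ᵥ x)]),
    trace_smul, trace_vecMulVec, dotProduct_comm x (star x), hx]
  simp

end PureState

section UnitaryGroup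

variable {n : Type*} [Fintype n] [DecidableEq n]

lemma exists_mem_unitaryGroup_mulVec_single (i : n) {x : n → ℂ} (hx : star x ⬝ᵥ x = 1) :
    ∃ U ∈ unitaryGroup n ℂ, U *ᵥ Pi.single i 1 = x := by
  have hx' : Orthonormal ℂ (({i} : Set n).domRestrict fun _ => WithLp.toLp 2 x) := by
    rw [orthonormal_iff_ite]
    rintro ⟨j, rfl⟩ ⟨k, rfl⟩
    rw [if_pos rfl]
    exact (EuclideanSpace.inner_toLp_toLp x x).trans ((dotProduct_comm _ _).trans hx)
  obtain ⟨b, hb⟩ := hx'.exists_orthonormalBasis_extension_of_card_eq (by simp)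
  refine ⟨(EuclideanSpace.basisFun n ℂ).toBasis.toMatrix b,
    (EuclideanSpace.basisFun n ℂ).toMatrix_orthonormalBasis_mem_unitary b, ?_⟩
  ext j
  simp [Module.Basis.toMatrix_apply, hb i rfl]

lemma exists_mem_unitaryGroup_mulVec_eq {x y : n → ℂ} (hx : star x ⬝ᵥ x = 1)
    (hy : star y ⬝ᵥ y = 1) : ∃ U ∈ unitaryGroup n ℂ, U *ᵥ x = y := by
  obtain ⟨i⟩ : Nonempty n := by
    by_contra h
    simp [not_nonempty_iff.mp h, dotProduct] at hx
  obtain ⟨V, hV, hVx⟩ := exists_mem_unitaryGroup_mulVec_single i hx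
  obtain ⟨W, hW, hWy⟩ := exists_mem_unitaryGroup_mulVec_single i hy
  refine ⟨W * star V, mul_mem hW (Unitary.star_mem hV), ?_⟩
  rw [← mulVec_mulVec, ← hVx, mulVec_mulVec _ (star V), mem_unitaryGroup_iff'.mp hV, one_mulVec,
    hWy]

end UnitaryGroup

lemma sq_one_sub_MRe_conjTranspose_mul_vecMulVec_mul {n : Type*} [Fintype n] [DecidableEq n]
    {U : Matrix n n ℂ} (hU : U ∈ unitaryGroup n ℂ) {y : n → ℂ} (hy : star y ⬝ᵥ y = 1) :
    (1 - MRe (Uᴴ * vecMulVec (U *ᵥ y) (star (U *ᵥ y)) * U)) ^ 2 =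
      (1 + Complex.normSq (y ⬝ᵥ y)) / 2 := by
  rw [conjTranspose_mul_vecMulVec_mul, mulVec_mulVec, ← star_eq_conjTranspose,
    mem_unitaryGroup_iff'.mp hU, one_mulVec, MRe, sub_sub_cancel, fidelity_reState_vecMulVec hy,
    Real.sq_sqrt (by positivity [Complex.normSq_nonneg (y ⬝ᵥ y)])]

theorem stmt18 (d : ℕ) (hd : 2 ≤ d) (ψ : Fin d → ℂ) (hψ : star ψ ⬝ᵥ ψ = 1) :
    ∃ U : Fin 3 → Matrix (Fin d) (Fin d) ℂ,
      (∀ k, U k ∈ Matrix.unitaryGroup (Fin d) ℂ) ∧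
      ∑ k, (1 - MRe ((U k)ᴴ * Matrix.vecMulVec ψ (star ψ) * U k)) ^ 2 = 5 / 2 := by
  let i₀ : Fin d := ⟨0, by omega⟩
  let i₁ : Fin d := ⟨1, by omega⟩
  have hi : i₀ ≠ i₁ := by simp [i₀, i₁, Fin.ext_iff]
  obtain ⟨c, hc_conj, hc⟩ : ∃ c : ℂ, starRingEnd ℂ c = c ∧ c * c = 1 / 2 := by
    refine ⟨((√2)⁻¹ : ℝ), Complex.conj_ofReal _, ?_⟩
    rw [← Complex.ofReal_mul, ← mul_inv, Real.mul_self_sqrt zero_le_two]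
    norm_num
  let e : Fin d → ℂ := Pi.single i₀ 1
  let φ : Fin d → ℂ := Pi.single i₀ c + Pi.single i₁ (I * c)
  have he : star e ⬝ᵥ e = 1 ∧ e ⬝ᵥ e = 1 := by simp [e]
  have hφ : star φ ⬝ᵥ φ = 1 ∧ φ ⬝ᵥ φ = 0 := by
    simp only [φ, star_add, Pi.star_single, RCLike.star_def, hc_conj, star_mul', conj_I,
      neg_mul, dotProduct_add, dotProduct_single, Pi.add_apply, Pi.single_eq_same,
      Pi.single_eq_of_ne hi, Pi.single_eq_of_ne hi.symm, add_zero, zero_add]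
    constructor
    · linear_combination 2 * hc - c ^ 2 * Complex.I_mul_I
    · linear_combination c ^ 2 * Complex.I_mul_I
  obtain ⟨U, hU, hUe⟩ := exists_mem_unitaryGroup_mulVec_eq he.1 hψ
  obtain ⟨V, hV, hVφ⟩ := exists_mem_unitaryGroup_mulVec_eq hφ.1 hψ
  refine ⟨![U, U, V], fun k => by fin_cases k <;> assumption, ?_⟩
  rw [Fin.sum_univ_three]
  simp only [cons_val_zero, cons_val_one, cons_val_two, head_cons, tail_cons]
  rw [← hUe, sq_one_sub_MRe_conjTranspose_mul_vecMulVec_mul hU he.1, hUe, ← hVφ,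
    sq_one_sub_MRe_conjTranspose_mul_vecMulVec_mul hV hφ.1, he.2, hφ.2]
  norm_num
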